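/- arXiv:1702.08239 — 3 statements merged into one kernel-verified Lean document; each statement's English description precedes it below -/
import Mathlib

section
/- For α ∈ (0,1), the function f(w) = (α/Γ(1-α)) · w^(-α-1) · (1 - e^(-w)) for w > 0 is a probability density, i.e., ∫₀^∞ (α/Γ(1-α)) w^(-α-1)(1-e^(-w)) dw = 1. -/
/-! Integrate by parts with `u = 1 - e^{-w}` and `dv = w^{-α-1} dw`. The boundary term
`(1 - e^{-w}) w^{-α} / α` vanishes at `0` because `1 - e^{-w} ≤ w` and at `∞` because `α > 0`,
leaving `(1/α) ∫₀^∞ e^{-w} w^{-α} dw = Γ(1-α)/α`. -/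

open MeasureTheory Real Set Filter Topology

lemma one_sub_exp_neg_nonneg {w : ℝ} (hw : 0 ≤ w) : 0 ≤ 1 - exp (-w) :=
  sub_nonneg.2 (exp_le_one_iff.2 (neg_nonpos.2 hw))

lemma one_sub_exp_neg_le_self (w : ℝ) : 1 - exp (-w) ≤ w := by
  linarith [one_sub_le_exp_neg w]

lemma integrableOn_one_sub_exp_neg_mul_rpow {s : ℝ} (hs₀ : -2 < s) (hs₁ : s < -1) :
    IntegrableOn (fun w => (1 - exp (-w)) * w ^ s) (Ioi 0) := by
  have hmeas : Measurable fun w : ℝ => (1 - exp (-w)) * w ^ s := by fun_prop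
  have near_zero : IntegrableOn (fun w => (1 - exp (-w)) * w ^ s) (Ioc 0 1) := by
    have hdom : IntegrableOn (fun w : ℝ => w ^ (s + 1)) (Ioc 0 1) :=
      (intervalIntegrable_iff_integrableOn_Ioc_of_le zero_le_one).1
        (intervalIntegral.intervalIntegrable_rpow' (by linarith))
    refine hdom.mono' hmeas.aestronglyMeasurable ?_
    filter_upwards [ae_restrict_mem measurableSet_Ioc] with w hw
    rw [norm_of_nonneg (mul_nonneg (one_sub_exp_neg_nonneg hw.1.le) (rpow_nonneg hw.1.le _)),
      rpow_add_one hw.1.ne', mul_comm (w ^ s)]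
    exact mul_le_mul_of_nonneg_right (one_sub_exp_neg_le_self w) (rpow_nonneg hw.1.le _)
  have near_top : IntegrableOn (fun w => (1 - exp (-w)) * w ^ s) (Ioi 1) := by
    refine (integrableOn_Ioi_rpow_of_lt hs₁ one_pos).mono' hmeas.aestronglyMeasurable ?_
    filter_upwards [ae_restrict_mem measurableSet_Ioi] with w (hw : 1 < w)
    have hw₀ : 0 < w := one_pos.trans hw
    rw [norm_of_nonneg (mul_nonneg (one_sub_exp_neg_nonneg hw₀.le) (rpow_nonneg hw₀.le _))]
    exact mul_le_of_le_one_left (rpow_nonneg hw₀.le _) (sub_le_self _ (exp_pos _).le)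
  simpa only [Ioc_union_Ioi_eq_Ioi zero_le_one] using near_zero.union near_top

lemma tendsto_one_sub_exp_neg_mul_rpow_nhdsGT_zero {s : ℝ} (hs : -1 < s) :
    Tendsto (fun w => (1 - exp (-w)) * w ^ s) (𝓝[>] 0) (𝓝 0) := by
  have hbound : Tendsto (fun w : ℝ => w ^ (s + 1)) (𝓝[>] 0) (𝓝 0) := by
    have := (continuousAt_rpow_const 0 (s + 1) (Or.inr (by linarith))).tendsto
    rw [zero_rpow (by linarith)] at this
    exact this.mono_left nhdsWithin_le_nhds
  refine tendsto_of_tendsto_of_tendsto_of_le_of_le' tendsto_const_nhds hbound ?_ ?_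
  all_goals filter_upwards [self_mem_nhdsWithin] with w (hw : 0 < w)
  · exact mul_nonneg (one_sub_exp_neg_nonneg hw.le) (rpow_nonneg hw.le _)
  · rw [rpow_add_one hw.ne', mul_comm (w ^ s)]
    exact mul_le_mul_of_nonneg_right (one_sub_exp_neg_le_self w) (rpow_nonneg hw.le _)

lemma tendsto_one_sub_exp_neg_mul_rpow_atTop {s : ℝ} (hs : s < 0) :
    Tendsto (fun w => (1 - exp (-w)) * w ^ s) atTop (𝓝 0) := by
  have hexp : Tendsto (fun w : ℝ => 1 - exp (-w)) atTop (𝓝 1) := by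
    simpa using (tendsto_exp_neg_atTop_nhds_zero).const_sub 1
  simpa using hexp.mul (tendsto_rpow_neg_atTop (neg_pos.2 hs))

lemma integral_one_sub_exp_neg_mul_rpow {α : ℝ} (hα₀ : 0 < α) (hα₁ : α < 1) :
    ∫ w in Ioi 0, (1 - exp (-w)) * w ^ (-α - 1) = Gamma (1 - α) / α := by
  set u : ℝ → ℝ := fun w => 1 - exp (-w)
  set v : ℝ → ℝ := fun w => w ^ (-α) / (-α)
  have hu : ∀ w ∈ Ioi (0 : ℝ), HasDerivAt u (exp (-w)) w := fun w _ => by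
    simpa using ((hasDerivAt_neg w).exp).const_sub 1
  have hv : ∀ w ∈ Ioi (0 : ℝ), HasDerivAt v (w ^ (-α - 1)) w := fun w hw => by
    have := (hasDerivAt_rpow_const (p := -α) (Or.inl (ne_of_gt hw))).div_const (-α)
    rwa [mul_div_cancel_left₀ _ (neg_ne_zero.2 hα₀.ne')] at this
  have huv : u * v = fun w => (1 - exp (-w)) * w ^ (-α) / (-α) :=
    funext fun _ => (mul_div_assoc ..).symm
  have h_zero : Tendsto (u * v) (𝓝[>] 0) (𝓝 0) := by
    rw [huv]
    simpa only [zero_div] using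
      (tendsto_one_sub_exp_neg_mul_rpow_nhdsGT_zero (s := -α) (by linarith)).div_const (-α)
  have h_infty : Tendsto (u * v) atTop (𝓝 0) := by
    rw [huv]
    simpa only [zero_div] using
      (tendsto_one_sub_exp_neg_mul_rpow_atTop (s := -α) (by linarith)).div_const (-α)
  have hu'v : IntegrableOn (fun w => exp (-w) * v w) (Ioi 0) := by
    have := (GammaIntegral_convergent (s := 1 - α) (by linarith)).div_const (-α)
    simp only [sub_sub_cancel_left, mul_div_assoc] at this
    exact this
  have hΓ : ∫ w in Ioi 0, exp (-w) * w ^ (-α) = Gamma (1 - α) := by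
    rw [Gamma_eq_integral (by linarith), sub_sub_cancel_left]
  rw [integral_Ioi_mul_deriv_eq_deriv_mul hu hv
    (integrableOn_one_sub_exp_neg_mul_rpow (by linarith) (by linarith)) hu'v h_zero h_infty]
  simp only [v, ← mul_div_assoc, integral_div, hΓ]
  ring

/-- The BFRY density with discount parameter `α ∈ (0,1)` integrates to one:
`∫₀^∞ (α/Γ(1-α)) w^(-α-1) (1 - e^(-w)) dw = 1`. -/
theorem bfry_density_integrates_to_one (α : ℝ) (hα0 : 0 < α) (hα1 : α < 1) :
    ∫ w in Ioi (0:ℝ),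
      (α / Real.Gamma (1 - α)) * w ^ (-α - 1) * (1 - Real.exp (-w)) = 1 := by
  have hΓ : Gamma (1 - α) ≠ 0 := (Gamma_pos_of_pos (by linarith)).ne'
  calc ∫ w in Ioi 0, α / Gamma (1 - α) * w ^ (-α - 1) * (1 - exp (-w))
      = α / Gamma (1 - α) * ∫ w in Ioi 0, (1 - exp (-w)) * w ^ (-α - 1) := by
        rw [← integral_const_mul]
        congr 1 with w
        ring
    _ = 1 := by
        rw [integral_one_sub_exp_neg_mul_rpow hα0 hα1]
        field_simp
end

section
/- Let α ∈ (0,1), let g be a Gamma(1-α, 1) random variable and b an independent Beta(α, 1) random variable. Then the ratio Z = g/b has probability density proportional to z^(-α-1)(1-e^(-z)) on (0,∞), i.e., Z is BFRY distributed with parameter α. -/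
/-!
Given `b = y ≠ 0`, the substitution `x = y z` shows that `g / b` has density
`z ↦ ∫ |y| f_b(y) f_g(y z) dy`. For the Gamma and Beta densities the powers of `y` cancel,
`y · α y^(α-1) · (y z)^(-α) = α z^(-α)`, so this is
`α z^(-α) / Γ(1-α) · ∫₀¹ e^(-y z) dy = α z^(-α-1) (1 - e^(-z)) / Γ(1-α)` for `z > 0`.
-/

open MeasureTheory ProbabilityTheory Real Set

open scoped ENNReal

theorem lintegral_eq_ofReal_abs_mul_lintegral_comp_mul {a : ℝ} (ha : a ≠ 0)
    (f : ℝ → ℝ≥0∞) :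
    ∫⁻ x, f x = ENNReal.ofReal |a| * ∫⁻ x, f (a * x) := by
  conv_lhs => rw [← Real.smul_map_volume_mul_left ha]
  rw [lintegral_smul_measure, smul_eq_mul,
    show (a * ·) = ⇑(MeasurableEquiv.mulLeft₀ a ha) from rfl, lintegral_map_equiv]
  rfl

theorem map_div_prod_withDensity {f h : ℝ → ℝ≥0∞} (hf : Measurable f)
    (hh : Measurable h) :
    ((volume.withDensity f).prod (volume.withDensity h)).map (fun p => p.1 / p.2) =
      volume.withDensity (fun z => ∫⁻ y, ENNReal.ofReal |y| * h y * f (y * z)) := by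
  have hkernel : Measurable fun p : ℝ × ℝ =>
      ENNReal.ofReal |p.1| * h p.1 * f (p.1 * p.2) := by
    fun_prop
  refine Measure.ext_of_lintegral _ fun φ hφ => ?_
  have hφdiv : Measurable fun p : ℝ × ℝ => φ (p.1 / p.2) := by fun_prop
  have hsubst : ∀ᵐ y, h y * ∫⁻ x, f x * φ (x / y) =
      ∫⁻ z, ENNReal.ofReal |y| * h y * f (y * z) * φ z := by
    filter_upwards [Measure.ae_ne volume 0] with y hy
    rw [lintegral_eq_ofReal_abs_mul_lintegral_comp_mul hy, ← mul_assoc, mul_comm (h y),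
      ← lintegral_const_mul _ (by fun_prop)]
    simp only [mul_div_cancel_left₀ _ hy, mul_assoc]
  calc ∫⁻ z, φ z
        ∂((volume.withDensity f).prod (volume.withDensity h)).map (fun p => p.1 / p.2)
      = ∫⁻ y, ∫⁻ x, φ (x / y) ∂volume.withDensity f ∂volume.withDensity h := by
        rw [lintegral_map hφ (by fun_prop), lintegral_prod_symm _ hφdiv.aemeasurable]
    _ = ∫⁻ y, h y * ∫⁻ x, f x * φ (x / y) := by
        rw [lintegral_withDensity_eq_lintegral_mul _ hh hφdiv.lintegral_prod_left']
        refine lintegral_congr fun y => ?_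
        rw [Pi.mul_apply, lintegral_withDensity_eq_lintegral_mul _ hf (by fun_prop)]
        rfl
    _ = ∫⁻ y, ∫⁻ z, ENNReal.ofReal |y| * h y * f (y * z) * φ z := lintegral_congr_ae hsubst
    _ = ∫⁻ z, (∫⁻ y, ENNReal.ofReal |y| * h y * f (y * z)) * φ z := by
        rw [lintegral_lintegral_swap (by fun_prop)]
        refine lintegral_congr fun z => ?_
        rw [lintegral_mul_const _ (by fun_prop)]
    _ = ∫⁻ z, φ z
          ∂volume.withDensity (fun z => ∫⁻ y, ENNReal.ofReal |y| * h y * f (y * z)) := by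
        rw [lintegral_withDensity_eq_lintegral_mul _ hkernel.lintegral_prod_left' hφ]
        simp only [Pi.mul_apply]

theorem integral_Ioo_zero_one_exp_neg_mul {z : ℝ} (hz : z ≠ 0) :
    ∫ y in Ioo (0:ℝ) 1, exp (-(y * z)) = (1 - exp (-z)) / z := by
  rw [← integral_Ioc_eq_integral_Ioo, ← intervalIntegral.integral_of_le zero_le_one,
    intervalIntegral.integral_comp_mul_right (fun u => exp (-u)) hz,
    intervalIntegral.integral_comp_neg, integral_exp]
  simp [div_eq_inv_mul]

namespace BFRY

noncomputable def gammaDensity (α x : ℝ) : ℝ :=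
  (Ioi 0).indicator (fun x => x ^ (-α) * exp (-x) / Gamma (1 - α)) x

noncomputable def betaDensity (α x : ℝ) : ℝ :=
  (Ioo 0 1).indicator (fun x => α * x ^ (α - 1)) x

noncomputable def density (α z : ℝ) : ℝ :=
  (Ioi 0).indicator (fun z => α / Gamma (1 - α) * z ^ (-α - 1) * (1 - exp (-z))) z

theorem measurable_gammaDensity (α : ℝ) : Measurable (gammaDensity α) :=
  Measurable.indicator (by fun_prop) measurableSet_Ioi

theorem measurable_betaDensity (α : ℝ) : Measurable (betaDensity α) :=
  Measurable.indicator (by fun_prop) measurableSet_Ioo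

theorem betaDensity_nonneg {α : ℝ} (hα : 0 ≤ α) (x : ℝ) : 0 ≤ betaDensity α x :=
  indicator_nonneg (fun _ hx => mul_nonneg hα (rpow_nonneg hx.1.le _)) x

theorem abs_mul_betaDensity_mul_gammaDensity (α y z : ℝ) :
    |y| * betaDensity α y * gammaDensity α (y * z) =
      (Ioi 0).indicator (fun z => α / Gamma (1 - α) * z ^ (-α)) z *
        (Ioo 0 1).indicator (fun y => exp (-(y * z))) y := by
  by_cases hy : y ∈ Ioo (0:ℝ) 1
  · by_cases hz : z ∈ Ioi (0:ℝ)
    · have hy0 : 0 < y := hy.1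
      have hz0 : 0 < z := hz
      have hpow : y * y ^ (α - 1) * y ^ (-α) = 1 := by
        rw [mul_assoc, ← rpow_add hy0, show α - 1 + -α = -1 by ring, rpow_neg_one,
          mul_inv_cancel₀ hy0.ne']
      simp only [gammaDensity, betaDensity, indicator_of_mem hy, indicator_of_mem hz,
        indicator_of_mem (mem_Ioi.2 (mul_pos hy0 hz0)), abs_of_pos hy0, mul_rpow hy0.le hz0.le]
      linear_combination α * z ^ (-α) * exp (-(y * z)) / Gamma (1 - α) * hpow
    · have hyz : y * z ∉ Ioi 0 := fun h => hz (pos_of_mul_pos_right h hy.1.le)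
      simp [gammaDensity, indicator_of_notMem hyz, indicator_of_notMem hz]
  · simp [betaDensity, indicator_of_notMem hy]

theorem lintegral_abs_mul_betaDensity_mul_gammaDensity {α : ℝ} (hα0 : 0 ≤ α) (hα1 : α < 1)
    (z : ℝ) :
    ∫⁻ y, ENNReal.ofReal |y| * ENNReal.ofReal (betaDensity α y) *
        ENNReal.ofReal (gammaDensity α (y * z)) = ENNReal.ofReal (density α z) := by
  simp_rw [← ENNReal.ofReal_mul (abs_nonneg _),
    ← ENNReal.ofReal_mul (mul_nonneg (abs_nonneg _) (betaDensity_nonneg hα0 _)),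
    abs_mul_betaDensity_mul_gammaDensity]
  by_cases hz : z ∈ Ioi (0:ℝ)
  · have hz0 : 0 < z := hz
    have hc : 0 ≤ α / Gamma (1 - α) * z ^ (-α) :=
      mul_nonneg (div_nonneg hα0 (Gamma_pos_of_pos (by linarith)).le) (rpow_nonneg hz0.le _)
    have hint : IntegrableOn (fun y => exp (-(y * z))) (Ioo 0 1) :=
      (Continuous.integrableOn_Icc (by fun_prop)).mono_set Ioo_subset_Icc_self
    simp_rw [indicator_of_mem hz]
    rw [← ofReal_integral_eq_lintegral_ofReal
      (((integrable_indicator_iff measurableSet_Ioo).2 hint).const_mul _)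
      (ae_of_all _ fun y => mul_nonneg hc (indicator_nonneg (fun _ _ => (exp_pos _).le) y)),
      integral_const_mul, integral_indicator measurableSet_Ioo,
      integral_Ioo_zero_one_exp_neg_mul hz0.ne', density, indicator_of_mem hz,
      rpow_sub hz0, rpow_one]
    congr 1
    ring
  · simp [density, indicator_of_notMem hz]

end BFRY

/-- If `g ~ Gamma(1-α,1)` (density `x^(-α) e^(-x)/Γ(1-α)` on `(0,∞)`) and
`b ~ Beta(α,1)` (density `α x^(α-1)` on `(0,1)`) are independent, then the ratio
`Z = g/b` has the BFRY density `(α/Γ(1-α)) z^(-α-1)(1-e^(-z))` on `(0,∞)`. -/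
theorem ratio_gamma_beta_is_bfry (α : ℝ) (hα0 : 0 < α) (hα1 : α < 1)
    {Ω : Type*} [MeasureSpace Ω] [IsProbabilityMeasure (volume : Measure Ω)]
    (g b : Ω → ℝ) (hgm : Measurable g) (hbm : Measurable b)
    (hindep : IndepFun g b)
    (hg : Measure.map g volume = volume.withDensity (fun x =>
      ENNReal.ofReal (Set.indicator (Ioi (0:ℝ))
        (fun x => x ^ (-α) * Real.exp (-x) / Real.Gamma (1 - α)) x)))
    (hb : Measure.map b volume = volume.withDensity (fun x =>
      ENNReal.ofReal (Set.indicator (Ioo (0:ℝ) 1)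
        (fun x => α * x ^ (α - 1)) x))) :
    Measure.map (fun ω => g ω / b ω) volume = volume.withDensity (fun z =>
      ENNReal.ofReal (Set.indicator (Ioi (0:ℝ))
        (fun z => (α / Real.Gamma (1 - α)) * z ^ (-α - 1) * (1 - Real.exp (-z))) z)) := by
  change _ = volume.withDensity fun x => ENNReal.ofReal (BFRY.gammaDensity α x) at hg
  change _ = volume.withDensity fun x => ENNReal.ofReal (BFRY.betaDensity α x) at hb
  have hpair := (indepFun_iff_map_prod_eq_prod_map_map hgm.aemeasurable hbm.aemeasurable).1 hindep
  calc Measure.map (fun ω => g ω / b ω) volume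
      = (Measure.map (fun ω => (g ω, b ω)) volume).map (fun p => p.1 / p.2) :=
        (Measure.map_map (measurable_fst.div measurable_snd) (hgm.prodMk hbm)).symm
    _ = volume.withDensity fun z => ∫⁻ y, ENNReal.ofReal |y| *
          ENNReal.ofReal (BFRY.betaDensity α y) *
            ENNReal.ofReal (BFRY.gammaDensity α (y * z)) := by
        rw [hpair, hg, hb,
          map_div_prod_withDensity (BFRY.measurable_gammaDensity α).ennreal_ofReal
            (BFRY.measurable_betaDensity α).ennreal_ofReal]
    _ = volume.withDensity fun z => ENNReal.ofReal (BFRY.density α z) := by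
        simp_rw [BFRY.lintegral_abs_mul_betaDensity_mul_gammaDensity hα0.le hα1]
end

section
/- Let α ∈ (0,1) and C_n satisfy C_n → ∞ and C_n^α / n → 0. For each n, let V_{s,n,1}, ..., V_{s,n,n} be i.i.d. copies of V_{s,n} = W_n / C_n^(s-α), where W_n has truncated BFRY density f_n. Then the empirical mean (1/n)∑_{i=1}^n V_{s,n,i} minus E[V_{s,n}] converges to 0 in probability as n → ∞. -/
/-!
Chebyshev's inequality: the empirical mean of `n` independent copies of `V = W / C^(s-α)` deviates
from `E[V]` by at least `ε` with probability at most `E[V²] / (n ε²)`. Bounding `1 - e^(-w) ≤ 1`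
gives `E[W²] ≤ Z_C⁻¹ C^(2-α) / (2-α)`, and the normalisation `Z_C` is increasing in `C`, so
`Z_C ≥ Z_1 > 0` once `C ≥ 1`. For `s ≥ 1` this yields `E[V²] ≤ Z_1⁻¹ C^α / (2-α)`, and the deviation
probability is `O(C_n^α / n) → 0`.
-/

open MeasureTheory ProbabilityTheory Real Set Filter
open scoped ENNReal

/-- The truncated BFRY distribution on `(0, Cn]` with discount parameter `α`:
density `Z⁻¹ w^(-α-1)(1-e^(-w))` on `(0, Cn]`, where `Z` is the normalization. -/
noncomputable def truncBFRY (α Cn : ℝ) : Measure ℝ :=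
  volume.withDensity (fun w => ENNReal.ofReal
    (Set.indicator (Ioc (0:ℝ) Cn)
      (fun w => (∫ u in Ioc (0:ℝ) Cn, u ^ (-α - 1) * (1 - Real.exp (-u)))⁻¹ *
        w ^ (-α - 1) * (1 - Real.exp (-w))) w))

section Chebyshev

variable {Ω ι : Type*} [MeasurableSpace Ω] {μ : Measure Ω} [Fintype ι] [Nonempty ι]

theorem measure_abs_average_sub_ge_le [IsFiniteMeasure μ] {Y : ι → Ω → ℝ}
    (hY : ∀ i, MemLp (Y i) 2 μ) (hindep : Pairwise fun i j => IndepFun (Y i) (Y j) μ)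
    {m σ2 : ℝ} (hmean : ∀ i, μ[Y i] = m) (hvar : ∀ i, variance (Y i) μ ≤ σ2)
    {ε : ℝ} (hε : 0 < ε) :
    μ {ω | ε ≤ |1 / (Fintype.card ι : ℝ) * ∑ i, Y i ω - m|}
      ≤ ENNReal.ofReal (σ2 / (Fintype.card ι * ε ^ 2)) := by
  set n : ℝ := (Fintype.card ι : ℝ)
  have hn : 0 < n := by simp [n, Fintype.card_pos]
  have hsum : MemLp (∑ i, Y i) 2 μ := memLp_finsetSum' _ fun i _ => hY i
  have hmean_sum : μ[∑ i, Y i] = n * m := by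
    simp only [Finset.sum_apply]
    rw [integral_finsetSum _ fun i _ => (hY i).integrable one_le_two]
    simp [hmean, n]
  have hvar_sum : variance (∑ i, Y i) μ ≤ n * σ2 := by
    rw [IndepFun.variance_sum (fun i _ => hY i) fun i _ j _ hij => hindep hij]
    simpa [n] using Finset.sum_le_sum fun i (_ : i ∈ Finset.univ) => hvar i
  have hevent : {ω | ε ≤ |1 / n * ∑ i, Y i ω - m|}
      = {ω | n * ε ≤ |(∑ i, Y i) ω - μ[∑ i, Y i]|} := by
    ext ω
    rw [mem_ofPred_eq, mem_ofPred_eq, hmean_sum, Finset.sum_apply, ← mul_le_mul_iff_of_pos_left hn,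
      ← abs_of_pos hn, ← abs_mul, abs_of_pos hn, mul_sub, ← mul_assoc, mul_one_div_cancel hn.ne',
      one_mul]
  calc μ {ω | ε ≤ |1 / n * ∑ i, Y i ω - m|}
      ≤ ENNReal.ofReal (variance (∑ i, Y i) μ / (n * ε) ^ 2) :=
        hevent ▸ meas_ge_le_variance_div_sq hsum (by positivity)
    _ ≤ ENNReal.ofReal (σ2 / (n * ε ^ 2)) := by
        refine ENNReal.ofReal_le_ofReal ?_
        calc variance (∑ i, Y i) μ / (n * ε) ^ 2 ≤ n * σ2 / (n * ε) ^ 2 := by gcongr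
          _ = σ2 / (n * ε ^ 2) := by field_simp

end Chebyshev

section BFRY

variable {α C : ℝ}

noncomputable def bfryNorm (α C : ℝ) : ℝ :=
  ∫ u in Ioc (0:ℝ) C, u ^ (-α - 1) * (1 - exp (-u))

lemma rpow_mul_one_sub_exp_neg_nonneg {u : ℝ} (hu : 0 ≤ u) :
    0 ≤ u ^ (-α - 1) * (1 - exp (-u)) :=
  mul_nonneg (rpow_nonneg hu _) (sub_nonneg.2 (exp_le_one_iff.2 (neg_nonpos.2 hu)))

lemma rpow_mul_one_sub_exp_neg_le {u : ℝ} (hu : 0 < u) :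
    u ^ (-α - 1) * (1 - exp (-u)) ≤ u ^ (-α) := by
  calc u ^ (-α - 1) * (1 - exp (-u)) ≤ u ^ (-α - 1) * u := by
        gcongr; linarith [add_one_le_exp (-u)]
    _ = u ^ (-α) := by rw [← rpow_add_one hu.ne']; ring_nf

-- The integrand is dominated by `u ^ (-α)`, which is integrable at `0` because `α < 1`.
lemma integrableOn_rpow_mul_one_sub_exp_neg (hα : α < 1) (C : ℝ) :
    IntegrableOn (fun u => u ^ (-α - 1) * (1 - exp (-u))) (Ioc 0 C) := by
  refine (intervalIntegral.intervalIntegrable_rpow' (a := 0) (b := C)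
    (by linarith : -1 < -α)).1.mono' (by fun_prop) ?_
  filter_upwards [ae_restrict_mem measurableSet_Ioc] with u hu
  rw [norm_of_nonneg (rpow_mul_one_sub_exp_neg_nonneg hu.1.le)]
  exact rpow_mul_one_sub_exp_neg_le hu.1

lemma bfryNorm_nonneg (α C : ℝ) : 0 ≤ bfryNorm α C :=
  setIntegral_nonneg measurableSet_Ioc fun _ hu => rpow_mul_one_sub_exp_neg_nonneg hu.1.le

lemma bfryNorm_monotone (hα : α < 1) : Monotone (bfryNorm α) := fun _ C₂ h =>
  setIntegral_mono_set (integrableOn_rpow_mul_one_sub_exp_neg hα C₂)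
    (ae_restrict_of_forall_mem measurableSet_Ioc fun _ hu =>
      rpow_mul_one_sub_exp_neg_nonneg hu.1.le)
    (Ioc_subset_Ioc_right h).eventuallyLE

lemma bfryNorm_pos (hα : α < 1) (hC : 0 < C) : 0 < bfryNorm α C := by
  rw [bfryNorm, setIntegral_pos_iff_support_of_nonneg_ae
    (ae_restrict_of_forall_mem measurableSet_Ioc fun _ hu =>
      rpow_mul_one_sub_exp_neg_nonneg hu.1.le)
    (integrableOn_rpow_mul_one_sub_exp_neg hα C)]
  have hsupp : Ioc 0 C ⊆ Function.support fun u : ℝ => u ^ (-α - 1) * (1 - exp (-u)) :=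
    fun u hu => (mul_pos (rpow_pos_of_pos hu.1 _)
      (sub_pos.2 (exp_lt_one_iff.2 (neg_lt_zero.2 hu.1)))).ne'
  rw [inter_eq_right.2 hsupp]
  simpa using hC

lemma truncBFRY_eq_withDensity : truncBFRY α C = volume.withDensity fun w => ENNReal.ofReal
    ((Ioc 0 C).indicator (fun w => (bfryNorm α C)⁻¹ * w ^ (-α - 1) * (1 - exp (-w))) w) :=
  rfl

lemma truncBFRY_compl_Ioc : truncBFRY α C (Ioc 0 C)ᶜ = 0 := by
  rw [truncBFRY, withDensity_apply _ measurableSet_Ioc.compl]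
  exact setLIntegral_eq_zero measurableSet_Ioc.compl fun w hw => by simp [indicator_of_notMem hw]

lemma ae_mem_Ioc_truncBFRY : ∀ᵐ w ∂truncBFRY α C, w ∈ Ioc 0 C :=
  measure_eq_zero_iff_ae_notMem.1 truncBFRY_compl_Ioc |>.mono fun _ hw => not_notMem.1 hw

lemma integral_sq_truncBFRY_le (hα : α < 1) (hC : 0 < C) :
    ∫ w, w ^ 2 ∂truncBFRY α C ≤ (bfryNorm α C)⁻¹ * (C ^ (2 - α) / (2 - α)) := by
  rw [truncBFRY_eq_withDensity, integral_withDensity_eq_integral_toReal_smul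
    ((Measurable.indicator (by fun_prop) measurableSet_Ioc).ennreal_ofReal)
    (ae_of_all _ fun _ => ENNReal.ofReal_lt_top)]
  calc _ ≤ ∫ w, (Ioc 0 C).indicator (fun w => (bfryNorm α C)⁻¹ * w ^ (1 - α)) w := by
        refine integral_mono_of_nonneg
          (ae_of_all _ fun w => smul_nonneg ENNReal.toReal_nonneg (sq_nonneg w))
          ((integrable_indicator_iff measurableSet_Ioc).2
            ((intervalIntegral.intervalIntegrable_rpow' (r := 1 - α) (by linarith)).1.const_mul _))
          (ae_of_all _ fun w => ?_)
        by_cases hw : w ∈ Ioc 0 C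
        · have hexp : 0 ≤ 1 - exp (-w) := sub_nonneg.2 (exp_le_one_iff.2 (by linarith [hw.1]))
          have hZw : 0 ≤ (bfryNorm α C)⁻¹ * w ^ (-α - 1) :=
            mul_nonneg (inv_nonneg.2 (bfryNorm_nonneg α C)) (rpow_nonneg hw.1.le _)
          simp only [indicator_of_mem hw]
          rw [smul_eq_mul, ENNReal.toReal_ofReal (mul_nonneg hZw hexp)]
          calc (bfryNorm α C)⁻¹ * w ^ (-α - 1) * (1 - exp (-w)) * w ^ 2
              ≤ (bfryNorm α C)⁻¹ * w ^ (-α - 1) * 1 * w ^ 2 := by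
                gcongr; linarith [exp_pos (-w)]
            _ = (bfryNorm α C)⁻¹ * w ^ (1 - α) := by
                rw [mul_one, mul_assoc, ← rpow_two, ← rpow_add hw.1]; ring_nf
        · simp [indicator_of_notMem hw]
    _ = (bfryNorm α C)⁻¹ * (C ^ (2 - α) / (2 - α)) := by
        rw [integral_indicator measurableSet_Ioc, integral_const_mul,
          ← intervalIntegral.integral_of_le hC.le, integral_rpow (Or.inl (by linarith)),
          zero_rpow (by linarith)]
        ring_nf

lemma integral_sq_div_rpow_truncBFRY_le {s : ℝ} (hα : α < 1) (hs : 1 ≤ s) (hC : 1 ≤ C) :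
    ∫ w, (w / C ^ (s - α)) ^ 2 ∂truncBFRY α C ≤ (bfryNorm α 1)⁻¹ / (2 - α) * C ^ α := by
  have hC0 : 0 < C := by linarith
  have hZ : (bfryNorm α C)⁻¹ ≤ (bfryNorm α 1)⁻¹ :=
    inv_anti₀ (bfryNorm_pos hα one_pos) (bfryNorm_monotone hα hC)
  -- `C ^ (2 - α) / (C ^ (s - α)) ^ 2 = C ^ (α + 2 - 2 s)` and `s ≥ 1`
  have hpow : C ^ (2 - α) / (C ^ (s - α)) ^ 2 ≤ C ^ α := by
    rw [← rpow_natCast, ← rpow_mul hC0.le, ← rpow_sub hC0]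
    exact rpow_le_rpow_of_exponent_le hC (by push_cast; linarith)
  simp_rw [div_pow]
  rw [integral_div]
  calc (∫ w, w ^ 2 ∂truncBFRY α C) / (C ^ (s - α)) ^ 2
      ≤ (bfryNorm α C)⁻¹ * (C ^ (2 - α) / (2 - α)) / (C ^ (s - α)) ^ 2 := by
        gcongr; exact integral_sq_truncBFRY_le hα hC0
    _ = (bfryNorm α C)⁻¹ / (2 - α) * (C ^ (2 - α) / (C ^ (s - α)) ^ 2) := by ring
    _ ≤ (bfryNorm α 1)⁻¹ / (2 - α) * C ^ α := by
        have : 0 < 2 - α := by linarith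
        gcongr
        exact div_nonneg (inv_nonneg.2 (bfryNorm_pos hα one_pos).le) this.le

end BFRY

section EmpiricalMean

variable {Ω : Type*} [MeasurableSpace Ω] {μ : Measure Ω} {α C : ℝ}

lemma memLp_of_map_eq_truncBFRY [IsFiniteMeasure μ] {X : Ω → ℝ} (hX : AEMeasurable X μ)
    (hlaw : μ.map X = truncBFRY α C) (p : ℝ≥0∞) : MemLp X p μ :=
  MemLp.of_bound hX.aestronglyMeasurable C <|
    (ae_of_ae_map hX (hlaw ▸ ae_mem_Ioc_truncBFRY)).mono fun _ hω => by
      rw [norm_of_nonneg hω.1.le]; exact hω.2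

lemma measure_abs_empirical_mean_truncBFRY_sub_ge_le [IsProbabilityMeasure μ] {n : ℕ}
    (hn : 0 < n) {W : Fin n → Ω → ℝ} (hmeas : ∀ i, Measurable (W i)) (hindep : iIndepFun W μ)
    (hlaw : ∀ i, μ.map (W i) = truncBFRY α C) {s : ℝ} (hα : α < 1) (hs : 1 ≤ s) (hC : 1 ≤ C)
    {ε : ℝ} (hε : 0 < ε) :
    μ {ω | ε ≤ |(1 / (n : ℝ)) * ∑ i, W i ω / C ^ (s - α)
        - ∫ w, w / C ^ (s - α) ∂truncBFRY α C|}
      ≤ ENNReal.ofReal ((bfryNorm α 1)⁻¹ / (2 - α) * C ^ α / (n * ε ^ 2)) := by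
  have : Nonempty (Fin n) := ⟨⟨0, hn⟩⟩
  set K := C ^ (s - α)
  have hmem (i : Fin n) : MemLp (fun ω => W i ω / K) 2 μ := by
    simpa only [div_eq_mul_inv] using
      (memLp_of_map_eq_truncBFRY (hmeas i).aemeasurable (hlaw i) 2).mul_const K⁻¹
  have hmean (i : Fin n) : μ[fun ω => W i ω / K] = ∫ w, w / K ∂truncBFRY α C := by
    rw [← hlaw i, integral_map (hmeas i).aemeasurable (by fun_prop)]
  have hvar (i : Fin n) :
      variance (fun ω => W i ω / K) μ ≤ (bfryNorm α 1)⁻¹ / (2 - α) * C ^ α :=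
    calc variance (fun ω => W i ω / K) μ ≤ μ[(fun ω => W i ω / K) ^ 2] :=
          variance_le_expectation_sq (hmem i).1
      _ = ∫ w, (w / K) ^ 2 ∂truncBFRY α C := by
          rw [← hlaw i, integral_map (hmeas i).aemeasurable (by fun_prop)]; rfl
      _ ≤ _ := integral_sq_div_rpow_truncBFRY_le hα hs hC
  have hpair : Pairwise fun i j => IndepFun (fun ω => W i ω / K) (fun ω => W j ω / K) μ :=
    fun i j hij => (hindep.indepFun hij).comp (measurable_id.div_const K)
      (measurable_id.div_const K)
  simpa using measure_abs_average_sub_ge_le hmem hpair hmean hvar hε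

end EmpiricalMean

theorem empirical_mean_tendsto_in_probability_general (α : ℝ) (hα1 : α < 1)
    (C : ℕ → ℝ)
    (hC : Tendsto C atTop atTop)
    (hCn : Tendsto (fun n => C n ^ α / (n : ℝ)) atTop (nhds 0))
    (s : ℝ) (hs : 1 ≤ s)
    {Ω : Type*} [MeasureSpace Ω] [IsProbabilityMeasure (volume : Measure Ω)]
    (W : (n : ℕ) → Fin n → Ω → ℝ)
    (hmeas : ∀ n i, Measurable (W n i))
    (hindep : ∀ n, iIndepFun (W n) volume)
    (hlaw : ∀ n i, Measure.map (W n i) volume = truncBFRY α (C n)) :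
    ∀ ε > 0,
      Tendsto (fun n : ℕ => (volume : Measure Ω)
          {ω | ε ≤ |(1 / (n : ℝ)) * ∑ i : Fin n, W n i ω / C n ^ (s - α)
            - ∫ w, (w / C n ^ (s - α)) ∂(truncBFRY α (C n))|})
        atTop (nhds 0) := by
  intro ε hε
  set D := (bfryNorm α 1)⁻¹ / (2 - α) / ε ^ 2
  have hbound : Tendsto (fun n : ℕ => ENNReal.ofReal (D * (C n ^ α / n))) atTop (nhds 0) := by
    simpa using ENNReal.tendsto_ofReal (hCn.const_mul D)
  refine tendsto_of_tendsto_of_tendsto_of_le_of_le' tendsto_const_nhds hbound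
    (Eventually.of_forall fun _ => zero_le) ?_
  filter_upwards [hC.eventually_ge_atTop 1, eventually_gt_atTop 0] with n hC1 hn
  refine (measure_abs_empirical_mean_truncBFRY_sub_ge_le hn (hmeas n) (hindep n) (hlaw n)
    hα1 hs hC1 hε).trans (le_of_eq ?_)
  congr 1
  simp only [D]
  field_simp

/-- Weak law of large numbers for the triangular array `V_{s,n,i} = W_{n,i}/C_n^(s-α)`
with `W_{n,i}` i.i.d. truncated BFRY: the empirical mean minus its expectation
converges to `0` in probability as `n → ∞`. -/
theorem empirical_mean_tendsto_in_probability (α : ℝ) (hα0 : 0 < α) (hα1 : α < 1)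
    (C : ℕ → ℝ) (hCpos : ∀ n, 0 < C n)
    (hC : Tendsto C atTop atTop)
    (hCn : Tendsto (fun n => C n ^ α / (n : ℝ)) atTop (nhds 0))
    (s : ℝ) (hs : 1 ≤ s)
    {Ω : Type*} [MeasureSpace Ω] [IsProbabilityMeasure (volume : Measure Ω)]
    (W : (n : ℕ) → Fin n → Ω → ℝ)
    (hmeas : ∀ n i, Measurable (W n i))
    (hindep : ∀ n, iIndepFun (W n) volume)
    (hlaw : ∀ n i, Measure.map (W n i) volume = truncBFRY α (C n)) :
    ∀ ε > 0,
      Tendsto (fun n : ℕ => (volume : Measure Ω)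
          {ω | ε ≤ |(1 / (n : ℝ)) * ∑ i : Fin n, W n i ω / C n ^ (s - α)
            - ∫ w, (w / C n ^ (s - α)) ∂(truncBFRY α (C n))|})
        atTop (nhds 0) :=
  empirical_mean_tendsto_in_probability_general α hα1 C hC hCn s hs W hmeas hindep hlaw
end
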